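/- arXiv:1510.00638 — 5 statements merged into one kernel-verified Lean document; each statement's English description precedes it below -/
import Mathlib

section
/- If n ≡ 1 (mod 4), then P_n - 1 = P_{(n-1)/2} · Q_{(n+1)/2}. -/
def pellP : ℕ → ℕ
  | 0 => 0
  | 1 => 1
  | n + 2 => 2 * pellP (n + 1) + pellP n

def pellQ : ℕ → ℕ
  | 0 => 2
  | 1 => 2
  | n + 2 => 2 * pellQ (n + 1) + pellQ n

lemma pellP_step (m : ℕ) : pellP (m + 2) = 2 * pellP (m + 1) + pellP m := rfl

lemma pellQ_step (m : ℕ) : pellQ (m + 2) = 2 * pellQ (m + 1) + pellQ m := rfl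

lemma pellP_add (m n : ℕ) :
    pellP (m + n + 1) = pellP (m + 1) * pellP (n + 1) + pellP m * pellP n := by
  induction n using Nat.twoStepInduction with
  | zero => simp [pellP]
  | one =>
    have : m + 1 + 1 = m + 2 := rfl
    rw [this, pellP_step]; simp [pellP]; ring
  | more n ih1 ih2 =>
    have h3 : m + (n + 2) + 1 = (m + n + 1) + 2 := by ring
    rw [h3, pellP_step]
    have h4 : m + n + 1 + 1 = m + (n + 1) + 1 := by ring
    rw [h4, ih2, ih1]
    simp only [show n + 1 + 1 = n + 2 from rfl, show n + 2 + 1 = (n + 1) + 2 from rfl]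
    rw [pellP_step (n + 1), pellP_step n]
    ring

lemma pellQ_eq (n : ℕ) : pellQ (n + 1) = pellP (n + 2) + pellP n := by
  induction n using Nat.twoStepInduction with
  | zero => simp [pellP, pellQ]
  | one => simp [pellP, pellQ]
  | more n ih1 ih2 =>
    rw [show n + 2 + 1 = (n + 1) + 2 from rfl, pellQ_step, ih1, ih2,
      show n + 2 + 2 = (n + 2) + 2 from rfl, pellP_step (n + 2), pellP_step n]
    ring

lemma cassini_step1 (m : ℕ) (h : pellP (m + 1) ^ 2 = pellP m * pellP (m + 2) + 1) :
    pellP (m + 2) ^ 2 + 1 = pellP (m + 1) * pellP (m + 3) := by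
  rw [show m + 3 = (m + 1) + 2 from rfl, pellP_step (m + 1)]
  rw [show pellP (m + 1 + 1) = pellP (m + 2) from rfl]
  rw [pellP_step m] at h ⊢
  nlinarith [h]

lemma cassini_step2 (m : ℕ) (h : pellP (m + 1) ^ 2 + 1 = pellP m * pellP (m + 2)) :
    pellP (m + 2) ^ 2 = pellP (m + 1) * pellP (m + 3) + 1 := by
  rw [show m + 3 = (m + 1) + 2 from rfl, pellP_step (m + 1)]
  rw [show pellP (m + 1 + 1) = pellP (m + 2) from rfl]
  rw [pellP_step m] at h ⊢
  nlinarith [h]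

lemma cassini (k : ℕ) : pellP (2 * k + 1) ^ 2 = pellP (2 * k) * pellP (2 * k + 2) + 1 := by
  induction k with
  | zero => simp [pellP]
  | succ k ih =>
    have h1 := cassini_step1 (2 * k) ih
    have h2 := cassini_step2 (2 * k + 1) h1
    simp only [show 2 * k + 1 + 2 = 2 * (k + 1) + 1 by ring,
      show 2 * k + 1 + 1 = 2 * (k + 1) by ring,
      show 2 * k + 1 + 3 = 2 * (k + 1) + 2 by ring] at h2
    exact h2

theorem pellP_sub_one_of_mod_four_eq_one (n : ℕ) (hn : n % 4 = 1) :
    pellP n - 1 = pellP ((n - 1) / 2) * pellQ ((n + 1) / 2) := by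
  obtain ⟨k, rfl⟩ : ∃ k, n = 4 * k + 1 := ⟨n / 4, by omega⟩
  have e1 : (4 * k + 1 - 1) / 2 = 2 * k := by omega
  have e2 : (4 * k + 1 + 1) / 2 = 2 * k + 1 := by omega
  rw [e1, e2, pellQ_eq]
  have h1 : 4 * k + 1 = (2 * k) + (2 * k) + 1 := by ring
  rw [h1, pellP_add]
  have h2 := cassini k
  have key : pellP (2 * k + 1) * pellP (2 * k + 1) + pellP (2 * k) * pellP (2 * k) =
      pellP (2 * k) * (pellP (2 * k + 2) + pellP (2 * k)) + 1 := by nlinarith [h2]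
  rw [key, Nat.add_sub_cancel]
end

section
/- If n ≡ 3 (mod 4), then P_n - 1 = P_{(n+1)/2} · Q_{(n-1)/2}. -/
private lemma eP (n : ℕ) : (pellP (n + 2) : ℤ) = 2 * pellP (n + 1) + pellP n := by
  simp [pellP]

private lemma eQ (n : ℕ) : (pellQ (n + 2) : ℤ) = 2 * pellQ (n + 1) + pellQ n := by
  simp [pellQ]

private lemma key (m : ℕ) :
    (pellP (m + 1) : ℤ) * pellQ m = pellP (2 * m + 1) + (-1) ^ m ∧
    (pellP m : ℤ) * pellQ (m + 1) = pellP (2 * m + 1) - (-1) ^ m ∧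
    (pellP (m + 1) : ℤ) * pellQ (m + 1) = pellP (2 * m + 2) ∧
    (pellP (m + 2) : ℤ) * pellQ m = pellP (2 * m + 2) + 2 * (-1) ^ m := by
  induction m with
  | zero => norm_num [pellP, pellQ]
  | succ m ih =>
    obtain ⟨hA, hB, hC, hD⟩ := ih
    have h1 : 2 * (m + 1) + 1 = 2 * m + 1 + 2 := by ring
    have h2 : 2 * (m + 1) + 2 = 2 * m + 2 + 2 := by ring
    have h4 : m + 1 + 1 = m + 2 := rfl
    rw [h1, h2]
    have rP1 : (pellP (2 * m + 1 + 2) : ℤ) = 2 * pellP (2 * m + 2) + pellP (2 * m + 1) := by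
      have := eP (2 * m + 1); rwa [show 2 * m + 1 + 1 = 2 * m + 2 from rfl] at this
    have rP2 : (pellP (2 * m + 2 + 2) : ℤ) = 2 * pellP (2 * m + 1 + 2) + pellP (2 * m + 2) := by
      have := eP (2 * m + 2); rwa [show 2 * m + 2 + 1 = 2 * m + 1 + 2 from rfl] at this
    have rP0 := eP m
    have rP0' := eP (m + 1)
    have rQ0 := eQ m
    have hA' : (pellP (m + 1 + 1) : ℤ) * pellQ (m + 1) = pellP (2 * m + 1 + 2) + (-1) ^ (m + 1) := by
      rw [h4, rP0, rP1]
      linear_combination 2 * hC + hB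
    refine ⟨hA', ?_, ?_, ?_⟩
    · rw [rQ0, rP1]
      linear_combination 2 * hC + hA
    · have hA'' := hA'
      rw [h4] at hA''
      rw [rQ0, rP2]
      linear_combination 2 * hA'' + hD
    · rw [rP0', rP2]
      linear_combination 2 * hA' + hC

theorem pellP_sub_one_of_mod_four_eq_three (n : ℕ) (hn : n % 4 = 3) :
    pellP n - 1 = pellP ((n + 1) / 2) * pellQ ((n - 1) / 2) := by
  obtain ⟨k, rfl⟩ : ∃ k, n = 4 * k + 3 := ⟨n / 4, by omega⟩
  have h1 : (4 * k + 3 + 1) / 2 = 2 * k + 2 := by omega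
  have h2 : (4 * k + 3 - 1) / 2 = 2 * k + 1 := by omega
  rw [h1, h2]
  have hA := (key (2 * k + 1)).1
  rw [show 2 * (2 * k + 1) + 1 = 4 * k + 3 from by ring,
      show 2 * k + 1 + 1 = 2 * k + 2 from rfl,
      show ((-1 : ℤ)) ^ (2 * k + 1) = -1 from by simp [pow_succ, pow_mul]] at hA
  have hnn : (0 : ℤ) ≤ (pellP (2 * k + 2) : ℤ) * pellQ (2 * k + 1) := by positivity
  have hge : 1 ≤ pellP (4 * k + 3) := by
    have : (1 : ℤ) ≤ pellP (4 * k + 3) := by linarith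
    exact_mod_cast this
  zify [hge]
  linarith [hA]
end

section
/- If n is odd and q is a prime factor of the Pell number P_n, then q ≡ 1 (mod 4). -/
/-- Half-companion Pell numbers. -/
def pellH : ℕ → ℕ
  | 0 => 1
  | 1 => 1
  | n + 2 => 2 * pellH (n + 1) + pellH n

lemma pell_step (n : ℕ) :
    pellH (n + 1) = pellH n + 2 * pellP n ∧ pellP (n + 1) = pellH n + pellP n := by
  induction n with
  | zero => simp [pellH, pellP]
  | succ n ih =>
    obtain ⟨h1, h2⟩ := ih
    constructor
    · show 2 * pellH (n + 1) + pellH n = _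
      omega
    · show 2 * pellP (n + 1) + pellP n = _
      omega

lemma pell_key (n : ℕ) :
    (pellH n : ℤ) ^ 2 - 2 * (pellP n : ℤ) ^ 2 = (-1) ^ n := by
  induction n with
  | zero => simp [pellH, pellP]
  | succ n ih =>
    obtain ⟨h1, h2⟩ := pell_step n
    rw [h1, h2]
    push_cast
    rw [pow_succ]
    linear_combination -ih

lemma pellP_parity (n : ℕ) : pellP n % 2 = n % 2 ∧ pellP (n + 1) % 2 = (n + 1) % 2 := by
  induction n with
  | zero => simp [pellP]
  | succ n ih =>
    refine ⟨ih.2, ?_⟩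
    show (2 * pellP (n + 1) + pellP n) % 2 = _
    omega

theorem prime_factor_pellP_odd_mod_four (n q : ℕ) (hn : Odd n) (hq : q.Prime)
    (hdvd : q ∣ pellP n) : q % 4 = 1 := by
  have hodd : pellP n % 2 = 1 := by
    have := (pellP_parity n).1
    obtain ⟨k, rfl⟩ := hn
    omega
  have hq2 : q ≠ 2 := by
    rintro rfl
    omega
  haveI : Fact q.Prime := ⟨hq⟩
  have hsq : IsSquare (-1 : ZMod q) := by
    refine ⟨(pellH n : ZMod q), ?_⟩
    have key := pell_key n
    have hneg : ((-1 : ℤ) ^ n : ℤ) = -1 := hn.neg_one_pow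
    have : ((pellH n : ℤ) ^ 2 - 2 * (pellP n : ℤ) ^ 2 : ℤ) = -1 := by rw [key, hneg]
    have hcast := congrArg (fun z : ℤ => (z : ZMod q)) this
    push_cast at hcast
    have hP0 : ((pellP n : ℕ) : ZMod q) = 0 := (ZMod.natCast_eq_zero_iff _ _).2 hdvd
    rw [hP0] at hcast
    linear_combination -hcast
  have h3 : q % 4 ≠ 3 := (ZMod.exists_sq_eq_neg_one_iff).1 hsq
  have := hq.two_le
  have hqo : q % 2 = 1 := hq.eq_two_or_odd.resolve_left hq2
  omega
end

section
/- If a composite positive integer N satisfies φ(N) ∣ N - 1 (the Lehmer property), then N is odd and squarefree. -/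
theorem lehmer_odd_squarefree (N : ℕ) (hN : 1 < N) (hcomp : ¬ N.Prime)
    (hleh : N.totient ∣ N - 1) : Odd N ∧ Squarefree N := by
  have hN4 : 2 < N := by
    rcases Nat.lt_or_ge N 3 with h | h
    · interval_cases N
      · exact absurd Nat.prime_two hcomp
    · omega
  have heven : Even N.totient := Nat.totient_even hN4
  constructor
  · -- Odd N
    by_contra hodd
    have hNeven : Even N := Nat.not_odd_iff_even.mp hodd
    have : Odd (N - 1) := by
      obtain ⟨k, hk⟩ := hNeven
      refine ⟨k - 1, by omega⟩
    have h2 : (2:ℕ) ∣ N - 1 := heven.two_dvd.trans hleh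
    obtain ⟨a, ha⟩ := h2
    obtain ⟨k, hk⟩ := hNeven
    omega
  · rw [Nat.squarefree_iff_prime_squarefree]
    rintro p hp ⟨m, hm⟩
    have hdvd : p ∣ N.totient := by
      have : N.totient = p * (p * m).totient := by
        rw [hm, mul_assoc]
        exact Nat.totient_mul_of_prime_of_dvd hp ⟨m, rfl⟩
      exact ⟨(p * m).totient, this⟩
    have hpN : p ∣ N := ⟨p * m, by rw [hm, mul_assoc]⟩
    have hpN1 : p ∣ N - 1 := hdvd.trans hleh
    have h1 : p ∣ N - (N - 1) := Nat.dvd_sub hpN hpN1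
    have : N - (N - 1) = 1 := by omega
    rw [this] at h1
    exact hp.one_lt.ne' (Nat.eq_one_of_dvd_one h1)
end

section
/- There is no Pell number with the Lehmer property; that is, there is no n such that P_n is composite and φ(P_n) divides P_n - 1. -/
/-!
Let `N = P_n` be composite with `φ N ∣ N - 1`, and let `K` be the number of prime factors of `N`.
As `φ N` is even, `N` is odd, so `n = 2k + 1` and `N = P_k² + P_{k+1}²` with coprime summands;
hence `-1` is a square modulo `N`, every prime factor of `N` is `1 mod 4`, and
`4 ^ K ∣ φ N ∣ N - 1`. Now `N - 1 = P_a Q_b` with `a ∈ {k, k + 1}`, and `v₂ (P_a) = v₂ a`,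
`v₂ (Q_b) = 1`, so `4 ^ K ≤ 2 (k + 1)`.

On the other hand `N` is squarefree and `d φ N = N - 1` with `d ≥ 2`. Adding the prime factors of
`N` in increasing order, each new prime is at most `2K` times the product of the previous ones
(because `∏ p / (p - 1)` stays below `d` over a proper subset, and over the remaining primes
is at most `q / (q - #rest)` for the least remaining prime `q`), so `N ≤ (2K) ^ (2 ^ K - 1)`.
Together with `2 ^ (2k) ≤ N` this contradicts `4 ^ K ≤ 2k + 2`.
-/

open Finset

@[simp] lemma pellP_zero : pellP 0 = 0 := rfl
@[simp] lemma pellP_one : pellP 1 = 1 := rfl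
lemma pellP_add_two (n : ℕ) : pellP (n + 2) = 2 * pellP (n + 1) + pellP n := rfl
lemma pellQ_add_two (n : ℕ) : pellQ (n + 2) = 2 * pellQ (n + 1) + pellQ n := rfl

lemma pellP_add_add_one : ∀ m n : ℕ,
    pellP (m + n + 1) = pellP (m + 1) * pellP (n + 1) + pellP m * pellP n
  | m, 0 => by simp
  | m, 1 => by
    show pellP (m + 2) = pellP (m + 1) * 2 + pellP m * 1
    rw [pellP_add_two]; ring
  | m, n + 2 => by
    rw [show m + (n + 2) + 1 = m + n + 1 + 2 by ring, pellP_add_two,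
      show m + n + 1 + 1 = m + (n + 1) + 1 by ring, pellP_add_add_one m (n + 1),
      pellP_add_add_one m n, pellP_add_two (n + 1), pellP_add_two n]
    ring

lemma pellQ_add_one : ∀ n : ℕ, pellQ (n + 1) = pellP (n + 2) + pellP n
  | 0 => rfl
  | 1 => rfl
  | n + 2 => by
    rw [pellQ_add_two, pellQ_add_one (n + 1), pellQ_add_one n, pellP_add_two (n + 2),
      pellP_add_two (n + 1), pellP_add_two n]
    ring

lemma pellP_two_mul (n : ℕ) : pellP (2 * n) = pellP n * pellQ n := by
  cases n with
  | zero => rfl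
  | succ m =>
    rw [show 2 * (m + 1) = m + (m + 1) + 1 by ring, pellP_add_add_one, pellQ_add_one]
    ring

lemma pellP_two_mul_add_one (n : ℕ) : pellP (2 * n + 1) = pellP n ^ 2 + pellP (n + 1) ^ 2 := by
  rw [two_mul, pellP_add_add_one]; ring

lemma pellP_mul_pellP_add_two (n : ℕ) :
    (pellP n * pellP (n + 2) : ℤ) - pellP (n + 1) ^ 2 = (-1) ^ (n + 1) := by
  induction n with
  | zero => simp [pellP_add_two]
  | succ n ih =>
    rw [pellP_add_two (n + 1), pellP_add_two n] at *
    push_cast at *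
    linear_combination -ih

lemma pellP_two_mul_mul_pellP_two_mul_add_two (n : ℕ) :
    pellP (2 * n) * pellP (2 * n + 2) + 1 = pellP (2 * n + 1) ^ 2 := by
  have h := pellP_mul_pellP_add_two (2 * n)
  rw [pow_succ (-1 : ℤ), pow_mul] at h
  norm_num at h
  zify
  linear_combination h

lemma pellP_mod_two : ∀ n : ℕ, pellP n % 2 = n % 2
  | 0 => rfl
  | 1 => rfl
  | n + 2 => by rw [pellP_add_two]; have := pellP_mod_two n; omega

lemma pellQ_mod_four : ∀ n : ℕ, pellQ n % 4 = 2
  | 0 => rfl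
  | 1 => rfl
  | n + 2 => by
    rw [pellQ_add_two]; have := pellQ_mod_four n; have := pellQ_mod_four (n + 1); omega

lemma coprime_pellP_pellP_add_one : ∀ n : ℕ, (pellP n).Coprime (pellP (n + 1))
  | 0 => by simp
  | n + 1 => by
    rw [pellP_add_two, Nat.coprime_mul_right_add_right]
    exact (coprime_pellP_pellP_add_one n).symm

lemma two_pow_le_pellP_add_one : ∀ n : ℕ, 2 ^ n ≤ pellP (n + 1)
  | 0 => le_rfl
  | 1 => by decide
  | n + 2 => by
    have := two_pow_le_pellP_add_one (n + 1)
    rw [pellP_add_two (n + 1), pow_succ]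
    omega

lemma pellP_pos {n : ℕ} (hn : 0 < n) : 0 < pellP n := by
  obtain ⟨m, rfl⟩ := Nat.exists_eq_succ_of_ne_zero hn.ne'
  exact Nat.one_le_two_pow.trans (two_pow_le_pellP_add_one m)

lemma padicValNat_two_pellQ (n : ℕ) : padicValNat 2 (pellQ n) = 1 := by
  have h := pellQ_mod_four n
  obtain ⟨c, hc, hc2⟩ : ∃ c, pellQ n = 2 * c ∧ ¬ 2 ∣ c := ⟨pellQ n / 2, by omega, by omega⟩
  rw [hc, padicValNat.mul two_ne_zero (by omega), padicValNat.self one_lt_two,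
    padicValNat.eq_zero_of_not_dvd hc2]

lemma padicValNat_two_pellP (n : ℕ) : padicValNat 2 (pellP n) = padicValNat 2 n := by
  induction n using Nat.strong_induction_on with
  | _ n ih =>
  obtain ⟨m, rfl | rfl⟩ := Nat.even_or_odd' n
  · rcases m.eq_zero_or_pos with rfl | hm
    · rfl
    have hQ : pellQ m ≠ 0 := by have := pellQ_mod_four m; omega
    rw [pellP_two_mul, padicValNat.mul (pellP_pos hm).ne' hQ, padicValNat_two_pellQ,
      ih m (by omega), padicValNat.mul two_ne_zero hm.ne', padicValNat.self one_lt_two, add_comm]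
  · have h := pellP_mod_two (2 * m + 1)
    rw [padicValNat.eq_zero_of_not_dvd (by omega), padicValNat.eq_zero_of_not_dvd (by omega)]

lemma exists_pellP_mul_pellQ_add_one_eq (k : ℕ) :
    ∃ a b, k ≤ a ∧ a ≤ k + 1 ∧ pellP a * pellQ b + 1 = pellP (2 * k + 1) := by
  obtain ⟨j, rfl | rfl⟩ := Nat.even_or_odd' k
  · refine ⟨2 * j, 2 * j + 1, le_rfl, by omega, ?_⟩
    rw [pellQ_add_one, pellP_two_mul_add_one, ← pellP_two_mul_mul_pellP_two_mul_add_two]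
    ring
  · refine ⟨2 * j + 2, 2 * j + 1, by omega, le_rfl, ?_⟩
    rw [pellQ_add_one, pellP_two_mul_add_one, ← pellP_two_mul_mul_pellP_two_mul_add_two]
    ring

lemma two_pow_le_of_two_pow_dvd_pellP_sub_one {k e : ℕ} (hk : 0 < k)
    (h : 2 ^ e ∣ pellP (2 * k + 1) - 1) : 2 ^ e ≤ 2 * k + 2 := by
  obtain ⟨a, b, hka, hak, hab⟩ := exists_pellP_mul_pellQ_add_one_eq k
  have ha : 0 < a := hk.trans_le hka
  have hQ : pellQ b ≠ 0 := by have := pellQ_mod_four b; omega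
  rw [← hab, Nat.add_sub_cancel, padicValNat_dvd_iff_le (mul_ne_zero (pellP_pos ha).ne' hQ),
    padicValNat.mul (pellP_pos ha).ne' hQ, padicValNat_two_pellP, padicValNat_two_pellQ] at h
  calc 2 ^ e ≤ 2 ^ (padicValNat 2 a + 1) := Nat.pow_le_pow_right two_pos h
    _ = 2 * 2 ^ padicValNat 2 a := pow_succ' 2 _
    _ ≤ 2 * a := Nat.mul_le_mul_left 2 (Nat.le_of_dvd ha pow_padicValNat_dvd)
    _ ≤ 2 * k + 2 := by omega

lemma mod_four_eq_one_of_mem_primeFactors_pellP {k p : ℕ}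
    (hp : p ∈ (pellP (2 * k + 1)).primeFactors) : p % 4 = 1 := by
  have h3 := Nat.mod_four_ne_three_of_mem_primeFactors_of_isSquare_neg_one hp
    (ZMod.isSquare_neg_one_of_eq_sq_add_sq_of_coprime (pellP_two_mul_add_one k)
      (coprime_pellP_pellP_add_one k))
  have h2 : p % 2 = 1 := by
    refine (Nat.prime_of_mem_primeFactors hp).eq_two_or_odd.resolve_left ?_
    rintro rfl
    have := Nat.dvd_of_mem_primeFactors hp
    have := pellP_mod_two (2 * k + 1)
    omega
  omega

/-- The Weierstrass inequality `1 - #T / q ≤ ∏ p ∈ T, (1 - 1 / p)`, cleared of denominators. -/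
lemma mul_prod_le_mul_prod_sub_one_add_card_mul_prod {T : Finset ℕ} {q : ℕ}
    (hq : ∀ p ∈ T, q ≤ p) : q * ∏ p ∈ T, p ≤ q * ∏ p ∈ T, (p - 1) + #T * ∏ p ∈ T, p := by
  induction T using Finset.induction_on with
  | empty => simp
  | insert r T hr ih =>
    have ih := ih fun p hp => hq p (mem_insert_of_mem hp)
    have hqr := hq r (mem_insert_self r T)
    rw [prod_insert hr, prod_insert hr, card_insert_of_notMem hr]
    rcases r with _ | s
    · simp
    rw [Nat.add_sub_cancel]
    nlinarith [Nat.mul_le_mul_left s ih, Nat.mul_le_mul_right (∏ p ∈ T, p) hqr,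
      Nat.zero_le (#T * ∏ p ∈ T, p)]

section LehmerBound

variable {P : Finset ℕ} {d : ℕ}

lemma prod_lt_mul_prod_sub_one_of_ssubset (hP : ∀ p ∈ P, 2 ≤ p) (hd : 2 ≤ d)
    (h : d * ∏ p ∈ P, (p - 1) + 1 = ∏ p ∈ P, p) {S : Finset ℕ} (hS : S ⊂ P) :
    ∏ p ∈ S, p < d * ∏ p ∈ S, (p - 1) := by
  have hT : (P \ S).Nonempty := sdiff_nonempty.2 (not_subset_of_ssubset hS)
  have hFT : ∏ p ∈ P \ S, (p - 1) < ∏ p ∈ P \ S, p :=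
    prod_lt_prod_of_nonempty (fun p hp => by have := hP p (mem_sdiff.1 hp).1; omega)
      (fun p hp => by have := hP p (mem_sdiff.1 hp).1; omega) hT
  have hFS : 1 ≤ ∏ p ∈ S, (p - 1) :=
    one_le_prod' fun p hp => by have := hP p (hS.subset hp); omega
  rw [← prod_sdiff hS.subset (f := fun p => p - 1), ← prod_sdiff hS.subset (f := fun p => p)] at h
  by_contra! hle
  nlinarith [Nat.mul_le_mul_right (∏ p ∈ S, p) hFT, Nat.mul_le_mul_left (∏ p ∈ P \ S, (p - 1)) hle,
    Nat.mul_le_mul hd hFS]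

lemma le_card_sdiff_mul_prod_add_one (hP : ∀ p ∈ P, 2 ≤ p) (hd : 2 ≤ d)
    (h : d * ∏ p ∈ P, (p - 1) + 1 = ∏ p ∈ P, p) {S : Finset ℕ} (hS : S ⊆ P) {q : ℕ}
    (hq : q ∈ P \ S) (hmin : ∀ p ∈ P \ S, q ≤ p) :
    q ≤ #(P \ S) * (∏ p ∈ S, p + 1) := by
  have hSP : S ⊂ P := ssubset_of_subset_of_ne hS fun hSP => by simp [hSP] at hq
  have hlt := prod_lt_mul_prod_sub_one_of_ssubset hP hd h hSP
  have hW := mul_prod_le_mul_prod_sub_one_add_card_mul_prod hmin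
  have hMT : 0 < ∏ p ∈ P \ S, p :=
    prod_pos fun p hp => by have := hP p (mem_sdiff.1 hp).1; omega
  rw [← prod_sdiff hS (f := fun p => p - 1), ← prod_sdiff hS (f := fun p => p)] at h
  by_contra! hgt
  nlinarith [Nat.mul_le_mul_right (q * ∏ p ∈ P \ S, (p - 1)) hlt,
    Nat.mul_le_mul_left (∏ p ∈ S, p + 1) hW, Nat.mul_le_mul_right (∏ p ∈ P \ S, p) hgt]

lemma exists_subset_card_eq_prod_le (hP : ∀ p ∈ P, 2 ≤ p) (hd : 2 ≤ d)
    (h : d * ∏ p ∈ P, (p - 1) + 1 = ∏ p ∈ P, p) {i : ℕ} (hi : i ≤ #P) :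
    ∃ S ⊆ P, #S = i ∧ ∏ p ∈ S, p ≤ (2 * #P) ^ (2 ^ i - 1) := by
  induction i with
  | zero => exact ⟨∅, empty_subset P, rfl, by simp⟩
  | succ i ih =>
    obtain ⟨S, hSP, hcard, hprod⟩ := ih (by omega)
    have hne : (P \ S).Nonempty := by rw [← card_pos, card_sdiff_of_subset hSP]; omega
    set q := (P \ S).min' hne
    have hq : q ∈ P \ S := min'_mem _ hne
    have hqS : q ∉ S := (mem_sdiff.1 hq).2
    have hqle : q ≤ 2 * #P * ∏ p ∈ S, p := by
      have := le_card_sdiff_mul_prod_add_one hP hd h hSP hq fun p hp => min'_le _ p hp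
      have : #(P \ S) ≤ #P := card_le_card sdiff_subset
      have : 1 ≤ ∏ p ∈ S, p := one_le_prod' fun p hp => by have := hP p (hSP hp); omega
      nlinarith
    refine ⟨insert q S, insert_subset (mem_sdiff.1 hq).1 hSP,
      by rw [card_insert_of_notMem hqS, hcard], ?_⟩
    have hexp : 2 ^ (i + 1) - 1 = 2 ^ i - 1 + 1 + (2 ^ i - 1) := by
      have := Nat.one_le_two_pow (n := i)
      rw [pow_succ]
      omega
    calc ∏ p ∈ insert q S, p = q * ∏ p ∈ S, p := prod_insert hqS
      _ ≤ 2 * #P * (∏ p ∈ S, p) * ∏ p ∈ S, p := Nat.mul_le_mul_right _ hqle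
      _ ≤ 2 * #P * (2 * #P) ^ (2 ^ i - 1) * (2 * #P) ^ (2 ^ i - 1) := by gcongr
      _ = (2 * #P) ^ (2 ^ (i + 1) - 1) := by rw [← pow_succ', ← pow_add, hexp]

theorem prod_le_of_mul_prod_sub_one_add_one_eq (hP : ∀ p ∈ P, 2 ≤ p) (hd : 2 ≤ d)
    (h : d * ∏ p ∈ P, (p - 1) + 1 = ∏ p ∈ P, p) :
    ∏ p ∈ P, p ≤ (2 * #P) ^ (2 ^ #P - 1) := by
  obtain ⟨S, hSP, hcard, hprod⟩ := exists_subset_card_eq_prod_le hP hd h le_rfl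
  rwa [eq_of_subset_of_card_le hSP hcard.ge] at hprod

end LehmerBound

namespace Nat

lemma squarefree_of_totient_dvd_sub_one {N : ℕ} (hN : 1 < N) (h : φ N ∣ N - 1) :
    Squarefree N := by
  rw [squarefree_iff_prime_squarefree]
  intro p hp hpp
  have hpN : p ∣ N := (dvd_mul_right p p).trans hpp
  have hpφ : p ∣ φ N := by
    have := totient_dvd_of_dvd hpp
    rw [← sq, totient_prime_pow hp two_pos, show 2 - 1 = 1 from rfl, pow_one] at this
    exact (dvd_mul_right p _).trans this
  have := Nat.dvd_sub hpN (hpφ.trans h)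
  rw [Nat.sub_sub_self hN.le] at this
  exact hp.one_lt.ne' (dvd_one.1 this)

lemma totient_eq_prod_sub_one_of_squarefree {N : ℕ} (hN : Squarefree N) :
    φ N = ∏ p ∈ N.primeFactors, (p - 1) := by
  rw [totient_eq_div_primeFactors_mul, prod_primeFactors_of_squarefree hN,
    Nat.div_self (Nat.pos_of_ne_zero hN.ne_zero), one_mul]

lemma mod_two_eq_one_of_totient_dvd_sub_one {N : ℕ} (hN : 2 < N) (h : φ N ∣ N - 1) :
    N % 2 = 1 := by
  have := (totient_even hN).two_dvd.trans h
  omega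

lemma four_pow_card_primeFactors_dvd_totient {N : ℕ} (h : ∀ p ∈ N.primeFactors, p % 4 = 1) :
    4 ^ #N.primeFactors ∣ φ N := by
  rw [totient_eq_div_primeFactors_mul, ← prod_const]
  exact Dvd.dvd.mul_left (prod_dvd_prod_of_dvd _ _ fun p hp => by have := h p hp; omega) _

theorem le_of_totient_dvd_sub_one {N : ℕ} (hN : 1 < N) (hnp : ¬ N.Prime) (h : φ N ∣ N - 1) :
    N ≤ (2 * #N.primeFactors) ^ (2 ^ #N.primeFactors - 1) := by
  have hsq := squarefree_of_totient_dvd_sub_one hN h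
  obtain ⟨d, hd⟩ := h
  have hφ : 0 < φ N := totient_pos.2 (by omega)
  have hφN : φ N ≠ N - 1 := fun he => hnp ((totient_eq_iff_prime (by omega)).1 he)
  have hd2 : 2 ≤ d := by
    by_contra!
    interval_cases d <;> simp only [mul_zero, mul_one] at hd <;> omega
  conv_lhs => rw [← prod_primeFactors_of_squarefree hsq]
  refine prod_le_of_mul_prod_sub_one_add_one_eq (fun p hp => (prime_of_mem_primeFactors hp).two_le)
    hd2 ?_
  rw [← totient_eq_prod_sub_one_of_squarefree hsq, prod_primeFactors_of_squarefree hsq, mul_comm,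
    ← hd]
  omega

end Nat

lemma two_mul_pow_lt_two_pow_four_pow_sub_two {K : ℕ} (hK : 0 < K) :
    (2 * K) ^ (2 ^ K - 1) < 2 ^ (4 ^ K - 2) := by
  have hK2 : 2 * K ≤ 2 ^ K := by
    have := Nat.lt_two_pow_self (n := K - 1)
    rw [show K = K - 1 + 1 by omega, pow_succ]
    omega
  have hlt : K * (2 ^ K - 1) + 2 < 4 ^ K := by
    have hK1 : K + 1 ≤ 2 ^ K := Nat.lt_two_pow_self
    obtain ⟨y, hy⟩ : ∃ y, 2 ^ K = y + 2 := ⟨2 ^ K - 2, by omega⟩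
    rw [show 4 ^ K = 2 ^ K * 2 ^ K by rw [← mul_pow]; norm_num, hy,
      show y + 2 - 1 = y + 1 from rfl]
    nlinarith
  calc (2 * K) ^ (2 ^ K - 1) ≤ (2 ^ K) ^ (2 ^ K - 1) := Nat.pow_le_pow_left hK2 _
    _ = 2 ^ (K * (2 ^ K - 1)) := (pow_mul 2 K _).symm
    _ < 2 ^ (4 ^ K - 2) := Nat.pow_lt_pow_right one_lt_two (by omega)

theorem no_pell_lehmer :
    ¬ ∃ n : ℕ, 1 < pellP n ∧ ¬ (pellP n).Prime ∧ (pellP n).totient ∣ pellP n - 1 := by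
  rintro ⟨n, h1, hnp, hdvd⟩
  have h2 : 2 < pellP n := by
    by_contra!
    exact hnp (show pellP n = 2 by omega ▸ Nat.prime_two)
  obtain ⟨k, rfl⟩ : ∃ k, n = 2 * k + 1 := by
    have := Nat.mod_two_eq_one_of_totient_dvd_sub_one h2 hdvd
    have := pellP_mod_two n
    exact ⟨n / 2, by omega⟩
  have hk : 0 < k := Nat.pos_of_ne_zero fun hk => by simp [hk] at h1
  set N := pellP (2 * k + 1)
  set K := #N.primeFactors
  have hK : 0 < K := card_pos.2 (Nat.nonempty_primeFactors.2 h1)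
  have hlow : 2 ^ (2 * K) ≤ 2 * k + 2 := by
    refine two_pow_le_of_two_pow_dvd_pellP_sub_one hk ?_
    rw [pow_mul]
    exact (Nat.four_pow_card_primeFactors_dvd_totient
      fun p hp => mod_four_eq_one_of_mem_primeFactors_pellP hp).trans hdvd
  have hup : 2 ^ (2 * k) < 2 ^ (4 ^ K - 2) :=
    ((two_pow_le_pellP_add_one (2 * k)).trans (Nat.le_of_totient_dvd_sub_one h1 hnp hdvd)).trans_lt
      (two_mul_pow_lt_two_pow_four_pow_sub_two hK)
  rw [Nat.pow_lt_pow_iff_right one_lt_two] at hup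
  have h4 : 4 ^ K = 2 ^ (2 * K) := by rw [pow_mul]; norm_num
  omega
end
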